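/- arXiv:math/0603477 — 7 statements merged into one kernel-verified Lean document; each statement's English description precedes it below -/
import Mathlib

section
/- The standard lattice Z^n contains at most 2·(μ + n/4)^{n/2}·π^{n/2}/Γ(n/2+1) vectors of squared Euclidean norm at most μ, for any real μ ≥ 0 and positive integer n. -/
/-!
Around each lattice point `z` with `‖z‖² ≤ μ` place the half of the open unit cube centred at `z`
that faces the origin, `z + {y ∈ (-1/2, 1/2)ⁿ | ⟪y, z⟫ ≤ 0}`. By the symmetry `y ↦ -y` it has
volume at least `1/2`; these cells are disjoint because the unit cubes around lattice points are;
and `‖z + y‖² = ‖z‖² + 2⟪y, z⟫ + ‖y‖² ≤ μ + n/4`, so every cell lies in the ball of radius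
`√(μ + n/4)`. Comparing volumes gives the bound.
-/

open Real MeasureTheory Metric
open scoped Pointwise ENNReal RealInnerProductSpace

namespace LatticePointCount

variable {ι : Type*}

def cube : Set (EuclideanSpace ℝ ι) := {y | ∀ i, |y i| < 1 / 2}

def latticePoint (z : ι → ℤ) : EuclideanSpace ℝ ι := WithLp.toLp 2 fun i => (z i : ℝ)

lemma cube_eq_preimage :
    (cube : Set (EuclideanSpace ℝ ι)) =
      WithLp.ofLp ⁻¹' Set.univ.pi fun _ => Set.Ioo (-(1 / 2)) (1 / 2) := by
  ext y
  simp [cube, abs_lt]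

lemma neg_mem_cube {y : EuclideanSpace ℝ ι} (hy : y ∈ cube) : -y ∈ cube := by
  simpa [cube] using hy

lemma pairwise_disjoint_latticePoint_vadd_cube :
    Pairwise fun z w : ι → ℤ =>
      Disjoint (latticePoint z +ᵥ (cube : Set (EuclideanSpace ℝ ι))) (latticePoint w +ᵥ cube) := by
  intro z w hzw
  refine Set.disjoint_left.mpr fun x hxz hxw => hzw (funext fun i => ?_)
  rw [Set.mem_vadd_set_iff_neg_vadd_mem] at hxz hxw
  have hz := hxz i
  have hw := hxw i
  simp only [vadd_eq_add, PiLp.add_apply, PiLp.neg_apply, latticePoint] at hz hw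
  have : |((z i - w i : ℤ) : ℝ)| < 1 := by
    rw [abs_lt] at hz hw ⊢
    push_cast
    constructor <;> linarith
  rwa [← Int.cast_abs, ← Int.cast_one, Int.cast_lt, Int.abs_lt_one_iff, sub_eq_zero] at this

variable [Fintype ι]

def halfCube (v : EuclideanSpace ℝ ι) : Set (EuclideanSpace ℝ ι) := cube ∩ {y | ⟪y, v⟫ ≤ 0}

lemma measurableSet_halfspace (v : EuclideanSpace ℝ ι) : MeasurableSet {y | ⟪y, v⟫ ≤ 0} :=
  measurableSet_le (by fun_prop) measurable_const

lemma measurableSet_cube : MeasurableSet (cube : Set (EuclideanSpace ℝ ι)) := by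
  rw [cube_eq_preimage]
  exact (PiLp.volume_preserving_ofLp ι).measurable
    (MeasurableSet.univ_pi fun _ => measurableSet_Ioo)

lemma measurableSet_halfCube (v : EuclideanSpace ℝ ι) : MeasurableSet (halfCube v) :=
  measurableSet_cube.inter (measurableSet_halfspace v)

lemma volume_cube : volume (cube : Set (EuclideanSpace ℝ ι)) = 1 := by
  rw [cube_eq_preimage, (PiLp.volume_preserving_ofLp ι).measure_preimage
    (MeasurableSet.univ_pi fun _ => measurableSet_Ioo).nullMeasurableSet, volume_pi_pi]
  norm_num

lemma one_le_two_mul_volume_halfCube (v : EuclideanSpace ℝ ι) :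
    1 ≤ 2 * volume (halfCube v) := by
  have hneg : -(cube \ {y | ⟪y, v⟫ ≤ 0}) ⊆ halfCube v := by
    rintro y ⟨hy, hyv⟩
    refine ⟨by simpa using neg_mem_cube hy, ?_⟩
    simp only [Set.mem_ofPred_eq, not_le, inner_neg_left] at hyv ⊢
    linarith
  calc 1 = volume (halfCube v) + volume (cube \ {y | ⟪y, v⟫ ≤ 0}) := by
        rw [halfCube, measure_inter_add_sdiff _ (measurableSet_halfspace v), volume_cube]
    _ ≤ volume (halfCube v) + volume (halfCube v) :=
        add_le_add_right ((Measure.measure_neg volume _).symm.trans_le (measure_mono hneg)) _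
    _ = 2 * volume (halfCube v) := (two_mul _).symm

lemma norm_sq_le_of_mem_cube {y : EuclideanSpace ℝ ι} (hy : y ∈ cube) :
    ‖y‖ ^ 2 ≤ Fintype.card ι / 4 := by
  rw [EuclideanSpace.norm_sq_eq]
  calc ∑ i, ‖y i‖ ^ 2 ≤ ∑ _i : ι, (1 / 2 : ℝ) ^ 2 := by
        gcongr with i
        exact hy i |>.le
    _ = Fintype.card ι / 4 := by rw [Finset.sum_const, Finset.card_univ, nsmul_eq_mul]; ring

lemma vadd_halfCube_subset_closedBall {v : EuclideanSpace ℝ ι} {μ : ℝ} (hv : ‖v‖ ^ 2 ≤ μ) :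
    v +ᵥ halfCube v ⊆ closedBall 0 √(μ + Fintype.card ι / 4) := by
  rintro _ ⟨y, ⟨hy, hyv⟩, rfl⟩
  rw [mem_closedBall_zero_iff, ← abs_norm]
  apply Real.abs_le_sqrt
  rw [show ‖v +ᵥ y‖ ^ 2 = _ from norm_add_sq_real v y, real_inner_comm]
  linarith [norm_sq_le_of_mem_cube hy, show ⟪y, v⟫ ≤ 0 from hyv]

def cell (z : ι → ℤ) : Set (EuclideanSpace ℝ ι) := latticePoint z +ᵥ halfCube (latticePoint z)

lemma norm_latticePoint_sq (z : ι → ℤ) : ‖latticePoint z‖ ^ 2 = ∑ i, (z i : ℝ) ^ 2 := by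
  simp [EuclideanSpace.norm_sq_eq, latticePoint]

lemma card_le_two_mul_volume_closedBall {μ : ℝ} (F : Finset (ι → ℤ))
    (hF : ∀ z ∈ F, ∑ i, (z i : ℝ) ^ 2 ≤ μ) :
    (F.card : ℝ≥0∞) ≤
      2 * volume (closedBall (0 : EuclideanSpace ℝ ι) √(μ + Fintype.card ι / 4)) := by
  have hdisj : (F : Set (ι → ℤ)).PairwiseDisjoint cell := fun z _ w _ hzw =>
    (pairwise_disjoint_latticePoint_vadd_cube hzw).mono
      (Set.vadd_set_mono Set.inter_subset_left) (Set.vadd_set_mono Set.inter_subset_left)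
  calc (F.card : ℝ≥0∞) = ∑ _z ∈ F, (1 : ℝ≥0∞) := by simp
    _ ≤ ∑ z ∈ F, 2 * volume (cell z) := by
        gcongr with z
        rw [cell, measure_vadd]
        exact one_le_two_mul_volume_halfCube _
    _ = 2 * volume (⋃ z ∈ F, cell z) := by
        rw [measure_biUnion_finset hdisj fun z _ => (measurableSet_halfCube _).const_vadd _,
          Finset.mul_sum]
    _ ≤ 2 * volume (closedBall (0 : EuclideanSpace ℝ ι) √(μ + Fintype.card ι / 4)) := by
        gcongr
        exact Set.iUnion₂_subset fun z hz =>
          vadd_halfCube_subset_closedBall ((norm_latticePoint_sq z).trans_le (hF z hz))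

lemma finite_setOf_sum_sq_le (μ : ℝ) : {z : ι → ℤ | ∑ i, (z i : ℝ) ^ 2 ≤ μ}.Finite :=
  (isCompact_closedBall (0 : ι → ℤ) √μ).finite_of_discrete.subset fun z hz => by
    rw [mem_closedBall_zero_iff, pi_norm_le_iff_of_nonneg (sqrt_nonneg μ)]
    intro i
    rw [Int.norm_eq_abs]
    exact Real.abs_le_sqrt
      ((Finset.single_le_sum (fun j _ => sq_nonneg (z j : ℝ)) (Finset.mem_univ i)).trans hz)

lemma volume_closedBall_sqrt [Nonempty ι] (x : EuclideanSpace ℝ ι) {a : ℝ} (ha : 0 ≤ a) :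
    volume (closedBall x √a) = ENNReal.ofReal
      (a ^ (Fintype.card ι / 2 : ℝ) * π ^ (Fintype.card ι / 2 : ℝ) /
        Gamma (Fintype.card ι / 2 + 1)) := by
  rw [EuclideanSpace.volume_closedBall, ← ENNReal.ofReal_pow (sqrt_nonneg _),
    ← ENNReal.ofReal_mul (by positivity), mul_div_assoc, sqrt_eq_rpow, sqrt_eq_rpow, ← rpow_natCast, ← rpow_natCast, ← rpow_mul ha,
    ← rpow_mul pi_pos.le]
  ring_nf

end LatticePointCount

open LatticePointCount

/-- The standard lattice `ℤⁿ` contains at most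
`2·(μ + n/4)^{n/2}·π^{n/2}/Γ(n/2+1)` vectors of squared Euclidean norm at most `μ`. -/
theorem stmt_0 (n : ℕ) (hn : 0 < n) (μ : ℝ) (hμ : 0 ≤ μ) :
    {z : Fin n → ℤ | (∑ i, ((z i : ℝ)) ^ 2) ≤ μ}.Finite ∧
    (Nat.card {z : Fin n → ℤ | (∑ i, ((z i : ℝ)) ^ 2) ≤ μ} : ℝ) ≤
      2 * (μ + n / 4) ^ ((n : ℝ) / 2) * π ^ ((n : ℝ) / 2) / Real.Gamma (n / 2 + 1) := by
  have : Nonempty (Fin n) := Fin.pos_iff_nonempty.mp hn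
  have hS := finite_setOf_sum_sq_le (ι := Fin n) μ
  refine ⟨hS, ?_⟩
  have hcount := card_le_two_mul_volume_closedBall hS.toFinset fun z hz => hS.mem_toFinset.mp hz
  rw [volume_closedBall_sqrt _ (by positivity), Fintype.card_fin, ← ENNReal.ofReal_natCast,
    ← ENNReal.ofReal_ofNat, ← ENNReal.ofReal_mul zero_le_two,
    ENNReal.ofReal_le_ofReal_iff (by positivity)] at hcount
  rw [Nat.card_eq_card_finite_toFinset hS]
  exact hcount.trans_eq (by ring)
end

section
/- Let A ⊂ R be an interval and f_1, f_2, ... : A → A a sequence of functions converging uniformly on A to a differentiable function f : A → A. Suppose f has a fixed point ξ ∈ A and sup_{x∈A} |f'(x)| = λ < 1. Define s_0(x) = x and s_n(x) = f_n(s_{n−1}(x)). Then for every x ∈ A, the sequence s_n(x) converges to ξ. -/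
/-!
By the mean value theorem `|f y - ξ| ≤ λ |y - ξ|` on `A`, so the distance `d n = |s n x - ξ|`
obeys `d (n + 1) ≤ λ d n + ε n`, where `ε n = |f_{n+1} (s n x) - f (s n x)|` tends to `0` by
uniform convergence. Once `ε n ≤ (1 - λ) c`, the excess `d n - c` contracts by the factor `λ`,
so `d n` eventually drops below any level above `c`.
-/

open Real Set Filter Topology

section Contraction

variable {a ε : ℕ → ℝ} {lam : ℝ}

lemma le_pow_mul_add_of_le_mul_add (hlam : 0 ≤ lam) {c : ℝ} {N : ℕ}
    (h : ∀ n ≥ N, a (n + 1) ≤ lam * a n + (1 - lam) * c) (k : ℕ) :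
    a (k + N) ≤ lam ^ k * (a N - c) + c := by
  induction k with
  | zero => simp
  | succ k ih =>
    calc a (k + 1 + N) = a (k + N + 1) := by rw [Nat.add_right_comm]
      _ ≤ lam * a (k + N) + (1 - lam) * c := h _ (Nat.le_add_left N k)
      _ ≤ lam * (lam ^ k * (a N - c) + c) + (1 - lam) * c := by gcongr
      _ = lam ^ (k + 1) * (a N - c) + c := by ring

lemma tendsto_zero_of_le_mul_add (hlam0 : 0 ≤ lam) (hlam1 : lam < 1) (ha : ∀ n, 0 ≤ a n)
    (hrec : ∀ n, a (n + 1) ≤ lam * a n + ε n) (hε : Tendsto ε atTop (𝓝 0)) :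
    Tendsto a atTop (𝓝 0) := by
  refine tendsto_order.2 ⟨fun b hb => .of_forall fun n => hb.trans_le (ha n), fun δ hδ => ?_⟩
  obtain ⟨N, hN⟩ := eventually_atTop.1 <|
    hε.eventually (gt_mem_nhds (mul_pos (sub_pos.2 hlam1) (half_pos hδ)))
  have hbound := le_pow_mul_add_of_le_mul_add hlam0 (c := δ / 2) fun n hn =>
    (hrec n).trans (add_le_add_right (hN n hn).le _)
  have hlim : Tendsto (fun k => lam ^ k * (a N - δ / 2) + δ / 2) atTop (𝓝 (δ / 2)) := by
    simpa using ((tendsto_pow_atTop_nhds_zero_of_lt_one hlam0 hlam1).mul_const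
      (a N - δ / 2)).add_const (δ / 2)
  rw [← map_add_atTop_eq_nat N, eventually_map]
  exact (hlim.eventually (gt_mem_nhds (half_lt_self hδ))).mono fun k hk =>
    (hbound k).trans_lt hk

end Contraction

lemma TendstoUniformlyOn.tendsto_dist_comp {ι α β : Type*} [PseudoMetricSpace β]
    {F : ι → α → β} {f : α → β} {p : Filter ι} {s : Set α} {x : ι → α}
    (h : TendstoUniformlyOn F f p s) (hx : ∀ᶠ i in p, x i ∈ s) :
    Tendsto (fun i => dist (f (x i)) (F i (x i))) p (𝓝 0) := by
  rw [tendstoUniformlyOn_iff_tendsto, Metric.uniformity_eq_comap_nhds_zero,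
    tendsto_comap_iff] at h
  exact h.comp (tendsto_id.prodMk (tendsto_principal.2 hx))

theorem stmt_6_general (A : Set ℝ) (hA : A.OrdConnected)
    (f : ℕ → ℝ → ℝ) (fl f' : ℝ → ℝ) (lam : ℝ)
    (hmaps : ∀ n, 1 ≤ n → Set.MapsTo (f n) A A)
    (hunif : TendstoUniformlyOn f fl atTop A)
    (hderiv : ∀ x ∈ A, HasDerivWithinAt fl (f' x) A x)
    (hlam : ∀ x ∈ A, |f' x| ≤ lam) (hlam1 : lam < 1)
    (ξ : ℝ) (hξ : ξ ∈ A) (hfix : fl ξ = ξ)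
    (s : ℕ → ℝ → ℝ) (hs0 : ∀ x, s 0 x = x)
    (hsrec : ∀ n x, s (n + 1) x = f (n + 1) (s n x)) :
    ∀ x ∈ A, Tendsto (fun n => s n x) atTop (nhds ξ) := by
  intro x hx
  have hlam0 : 0 ≤ lam := (abs_nonneg _).trans (hlam ξ hξ)
  have hcontr : ∀ y ∈ A, dist (fl y) ξ ≤ lam * dist y ξ := fun y hy => by
    simpa [hfix, dist_eq_norm] using hA.convex.norm_image_sub_le_of_norm_hasDerivWithin_le
      hderiv (fun z hz => by simpa using hlam z hz) hξ hy
  have horbit : ∀ n, s n x ∈ A := by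
    intro n
    induction n with
    | zero => rwa [hs0]
    | succ n ih => rw [hsrec]; exact hmaps (n + 1) n.succ_pos ih
  have herr : Tendsto (fun n => dist (fl (s n x)) (f (n + 1) (s n x))) atTop (𝓝 0) :=
    (hunif.seq_tendstoUniformlyOn _ (tendsto_add_atTop_nat 1)).tendsto_dist_comp
      (.of_forall horbit)
  have hstep : ∀ n, dist (s (n + 1) x) ξ ≤
      lam * dist (s n x) ξ + dist (fl (s n x)) (f (n + 1) (s n x)) := fun n => by
    rw [hsrec, dist_comm (fl _)]
    linarith [dist_triangle (f (n + 1) (s n x)) (fl (s n x)) ξ, hcontr _ (horbit n)]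
  rw [tendsto_iff_dist_tendsto_zero]
  exact tendsto_zero_of_le_mul_add hlam0 hlam1 (fun _ => dist_nonneg) hstep herr

/-- Structural stability of an attracting fixed point: if `f_n : A → A` converge
uniformly on the interval `A` to a differentiable `f : A → A` with fixed point `ξ` and
`|f'| ≤ λ < 1` on `A`, then the non-autonomous iteration `s_0(x) = x`,
`s_n(x) = f_n(s_{n-1}(x))` converges pointwise to `ξ`. -/
theorem stmt_6 (A : Set ℝ) (hA : A.OrdConnected)
    (f : ℕ → ℝ → ℝ) (fl f' : ℝ → ℝ) (lam : ℝ)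
    (hmaps : ∀ n, 1 ≤ n → Set.MapsTo (f n) A A)
    (hflmaps : Set.MapsTo fl A A)
    (hunif : TendstoUniformlyOn f fl atTop A)
    (hderiv : ∀ x ∈ A, HasDerivWithinAt fl (f' x) A x)
    (hlam : ∀ x ∈ A, |f' x| ≤ lam) (hlam1 : lam < 1)
    (ξ : ℝ) (hξ : ξ ∈ A) (hfix : fl ξ = ξ)
    (s : ℕ → ℝ → ℝ) (hs0 : ∀ x, s 0 x = x)
    (hsrec : ∀ n x, s (n + 1) x = f (n + 1) (s n x)) :
    ∀ x ∈ A, Tendsto (fun n => s n x) atTop (nhds ξ) :=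
  stmt_6_general A hA f fl f' lam hmaps hunif hderiv hlam hlam1 ξ hξ hfix s hs0 hsrec
end

section
/- The function τ : (0,∞) → (0,∞) defined by τ(x) = Σ_{k=1}^∞ e^{−π(k/x)²} is a strictly increasing bijection from (0,∞) onto (0,∞). -/
/-!
Each term `e^{-π(k/x)²}` is strictly increasing in `x`, so `τ` is strictly increasing; the terms are
dominated on `(0, b)` by the summable terms at `b`, which gives continuity and, by dominated
convergence, `τ(x) → 0` as `x → 0⁺`. The first `⌊x⌋` terms are each at least `e^{-π}`, so
`τ(x) → ∞`, and the intermediate value theorem gives surjectivity onto `(0, ∞)`.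
-/

open Real Set Filter Topology

/-- The paper's `τ`, i.e. `(θ₃(i/x²) - 1) / 2`. -/
noncomputable def thetaTail (x : ℝ) : ℝ := ∑' k : ℕ, exp (-π * (((k : ℝ) + 1) / x) ^ 2)

lemma summable_thetaTail {x : ℝ} (hx : x ≠ 0) :
    Summable fun k : ℕ => exp (-π * (((k : ℝ) + 1) / x) ^ 2) := by
  have hc : -π / x ^ 2 < 0 := div_neg_of_neg_of_pos (neg_neg_of_pos pi_pos) (by positivity)
  refine (summable_exp_nat_mul_of_ge hc (f := fun k => ((k : ℝ) + 1) ^ 2) fun k => ?_).congr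
    fun k => by ring_nf
  nlinarith

lemma strictMonoOn_exp_neg_pi_mul_div_sq (k : ℕ) :
    StrictMonoOn (fun x : ℝ => exp (-π * (((k : ℝ) + 1) / x) ^ 2)) (Ioi 0) := by
  intro x hx y hy hxy
  simp only [exp_lt_exp, neg_mul, neg_lt_neg_iff]
  have := hx.out
  have := hy.out
  gcongr

lemma strictMonoOn_thetaTail : StrictMonoOn thetaTail (Ioi 0) := fun _ hx _ hy hxy =>
  (summable_thetaTail hx.out.ne').tsum_lt_tsum (i := 0)
    (fun k => (strictMonoOn_exp_neg_pi_mul_div_sq k hx hy hxy).le)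
    (strictMonoOn_exp_neg_pi_mul_div_sq 0 hx hy hxy) (summable_thetaTail hy.out.ne')

lemma thetaTail_pos {x : ℝ} (hx : 0 < x) : 0 < thetaTail x :=
  (summable_thetaTail hx.ne').tsum_pos (fun _ => (exp_pos _).le) 0 (exp_pos _)

lemma continuousOn_thetaTail : ContinuousOn thetaTail (Ioi 0) := by
  intro x hx
  have hb : (0 : ℝ) < x + 1 := by linarith [hx.out]
  have hcont : ContinuousOn thetaTail (Ioo 0 (x + 1)) := by
    refine continuousOn_tsum (fun k => ?_) (summable_thetaTail hb.ne') fun k y hy => ?_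
    · exact ContinuousOn.rexp <| continuousOn_const.mul <|
        (continuousOn_const.div continuousOn_id fun y hy => hy.1.ne').pow 2
    · rw [norm_of_nonneg (exp_pos _).le]
      exact (strictMonoOn_exp_neg_pi_mul_div_sq k).monotoneOn hy.1 hb hy.2.le
  exact (hcont.continuousAt (Ioo_mem_nhds hx (lt_add_one x))).continuousWithinAt

lemma tendsto_exp_neg_pi_mul_div_sq_nhdsGT_zero (k : ℕ) :
    Tendsto (fun x : ℝ => exp (-π * (((k : ℝ) + 1) / x) ^ 2)) (𝓝[>] 0) (𝓝 0) := by
  have hdiv : Tendsto (fun x : ℝ => ((k : ℝ) + 1) / x) (𝓝[>] 0) atTop := by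
    simpa only [div_eq_mul_inv] using tendsto_inv_nhdsGT_zero.const_mul_atTop (by positivity)
  exact tendsto_exp_atBot.comp <|
    ((tendsto_pow_atTop two_ne_zero).comp hdiv).const_mul_atTop_of_neg (neg_neg_of_pos pi_pos)

lemma tendsto_thetaTail_nhdsGT_zero : Tendsto thetaTail (𝓝[>] 0) (𝓝 0) := by
  have hbound : ∀ᶠ x in 𝓝[>] (0 : ℝ), ∀ k : ℕ,
      ‖exp (-π * (((k : ℝ) + 1) / x) ^ 2)‖ ≤ exp (-π * (((k : ℝ) + 1) / 1) ^ 2) := by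
    filter_upwards [Ioo_mem_nhdsGT one_pos] with x hx k
    rw [norm_of_nonneg (exp_pos _).le]
    exact (strictMonoOn_exp_neg_pi_mul_div_sq k).monotoneOn hx.1 (mem_Ioi.mpr one_pos) hx.2.le
  have h := tendsto_tsum_of_dominated_convergence (summable_thetaTail one_ne_zero)
    tendsto_exp_neg_pi_mul_div_sq_nhdsGT_zero hbound
  rw [tsum_zero] at h
  exact h

lemma natFloor_mul_exp_neg_pi_le_thetaTail {x : ℝ} (hx : 0 < x) :
    ⌊x⌋₊ * exp (-π) ≤ thetaTail x := calc
  ⌊x⌋₊ * exp (-π) = ∑ _k ∈ Finset.range ⌊x⌋₊, exp (-π) := by simp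
  _ ≤ ∑ k ∈ Finset.range ⌊x⌋₊, exp (-π * (((k : ℝ) + 1) / x) ^ 2) := by
    refine Finset.sum_le_sum fun k hk => exp_le_exp.mpr ?_
    have hkx : (k : ℝ) + 1 ≤ x := by
      exact_mod_cast (Nat.le_floor_iff hx.le).mp (Finset.mem_range.mp hk)
    have : (((k : ℝ) + 1) / x) ^ 2 ≤ 1 := pow_le_one₀ (by positivity) ((div_le_one hx).mpr hkx)
    nlinarith [pi_pos]
  _ ≤ thetaTail x :=
    (summable_thetaTail hx.ne').sum_le_tsum _ fun _ _ => (exp_pos _).le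

lemma tendsto_thetaTail_atTop : Tendsto thetaTail atTop atTop := by
  have hlin : Tendsto (fun x : ℝ => (x - 1) * exp (-π)) atTop atTop :=
    (tendsto_atTop_add_const_right _ (-1) tendsto_id).atTop_mul_const (exp_pos _)
  refine tendsto_atTop_mono' _ ?_ hlin
  filter_upwards [eventually_gt_atTop 0] with x hx
  exact (mul_le_mul_of_nonneg_right (Nat.sub_one_lt_floor x).le (exp_pos _).le).trans
    (natFloor_mul_exp_neg_pi_le_thetaTail hx)

lemma ContinuousOn.surjOn_Ioi_of_tendsto {α δ : Type*} [ConditionallyCompleteLinearOrder α]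
    [TopologicalSpace α] [OrderTopology α] [DenselyOrdered α] [NoMaxOrder α]
    [LinearOrder δ] [NoMaxOrder δ] [TopologicalSpace δ] [OrderClosedTopology δ]
    {f : α → δ} {a : α} {b : δ} (hf : ContinuousOn f (Ioi a))
    (hleft : Tendsto f (𝓝[>] a) (𝓝 b)) (htop : Tendsto f atTop atTop) :
    SurjOn f (Ioi a) (Ioi b) := by
  intro y hy
  obtain ⟨x₁, hfx₁, hx₁⟩ :=
    ((hleft.eventually (eventually_lt_nhds hy)).and self_mem_nhdsWithin).exists
  obtain ⟨x₂, hfx₂, hx₂⟩ :=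
    ((htop.eventually (eventually_gt_atTop y)).and (eventually_gt_atTop a)).exists
  exact hf.surjOn_Icc hx₁ hx₂ ⟨hfx₁.le, hfx₂.le⟩

/-- The function `τ(x) = ∑_{k=1}^∞ e^{-π(k/x)²}` is a strictly increasing bijection
from `(0,∞)` onto `(0,∞)`. -/
theorem stmt_9 :
    StrictMonoOn (fun x : ℝ => ∑' k : ℕ, Real.exp (-π * (((k : ℝ) + 1) / x) ^ 2)) (Ioi 0) ∧
    Set.BijOn (fun x : ℝ => ∑' k : ℕ, Real.exp (-π * (((k : ℝ) + 1) / x) ^ 2))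
      (Ioi 0) (Ioi 0) :=
  ⟨strictMonoOn_thetaTail, fun _ hx => thetaTail_pos hx, strictMonoOn_thetaTail.injOn,
    continuousOn_thetaTail.surjOn_Ioi_of_tendsto tendsto_thetaTail_nhdsGT_zero
      tendsto_thetaTail_atTop⟩
end

section
/- Let μ ≥ 2 be an integer. There exists an increasing sequence of positive integers s_0 = 1 ≤ s_1 ≤ s_2 ≤ ... such that for every n ≥ 1, the lattice Λ_n = {z ∈ Z^{n+1} : Σ_{k=0}^n s_k z_k = 0} has minimum norm at least μ, and s_n ≤ 1 + √(μ−2)·(μ−1+n/4)^{n/2}·π^{n/2}/Γ(n/2+1). -/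
/-!
The sequence is built greedily: `sₙ` is the least `t ≥ 1` such that
`∑_{k<n} sₖ zₖ + t c ≠ 0` whenever `c ≥ 1` and `∑ zₖ² + c² < μ`; then every nonzero
vector of the kernel of `s₀, …, sₙ` has squared length at least `μ`, by induction on `n`.
A value `t` is excluded only if `t = -(∑ sₖ zₖ)/c` for some `z` with `∑ zₖ² ≤ μ - 1` and
`∑ sₖ zₖ < 0` and some `1 ≤ c ≤ √(μ - 2)`. Since `z ↦ -z` swaps the signs of `∑ sₖ zₖ`,
at most half of the integer points of the ball of radius `√(μ - 1)` qualify. Those points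
are counted by volume: the half of the unit cube around `z` on the side of the hyperplane
`⟨z, x - z⟩ = 0` towards the origin has volume at least `1/2`, these half-cubes are
disjoint, and they lie in the ball of radius `√(μ - 1 + n/4)`.
-/

open Real MeasureTheory Finset
open scoped ENNReal

section HalfCube

variable {n : ℕ}

def halfCube (z : Fin n → ℤ) : Set (Fin n → ℝ) :=
  Set.univ.pi (fun i => Metric.ball (z i : ℝ) (1 / 2)) ∩
    {x | ∑ i, (z i : ℝ) * (x i - z i) ≤ 0}

lemma measurableSet_halfCube (z : Fin n → ℤ) : MeasurableSet (halfCube z) :=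
  (MeasurableSet.univ_pi fun _ => measurableSet_ball).inter
    (measurableSet_le (by fun_prop) (by fun_prop))

lemma one_le_two_mul_volume_halfCube (z : Fin n → ℤ) : 1 ≤ 2 * volume (halfCube z) := by
  set cube := Set.univ.pi fun i => Metric.ball (z i : ℝ) (1 / 2)
  have volume_cube : volume cube = 1 := by
    simp [cube, volume_pi_pi, Real.volume_ball]
  -- the point reflection in `z` preserves the cube and flips the half-space
  set reflect : (Fin n → ℝ) → Fin n → ℝ := fun x => (fun i => 2 * (z i : ℝ)) - x
  have cube_subset : cube ⊆ halfCube z ∪ reflect ⁻¹' halfCube z := by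
    intro x hx
    rcases le_total (∑ i, (z i : ℝ) * (x i - z i)) 0 with h | h
    · exact Or.inl ⟨hx, h⟩
    · refine Or.inr ⟨fun i _ => ?_, ?_⟩
      · have := hx i trivial
        simp only [Metric.mem_ball, Real.dist_eq, reflect, Pi.sub_apply] at this ⊢
        rw [abs_sub_comm]; convert this using 2; ring
      · simp only [Set.mem_ofPred_eq, reflect, Pi.sub_apply]
        have : ∑ i, (z i : ℝ) * (2 * z i - x i - z i) = -∑ i, (z i : ℝ) * (x i - z i) := by
          rw [← Finset.sum_neg_distrib]; exact Finset.sum_congr rfl fun i _ => by ring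
        linarith
  calc 1 = volume cube := volume_cube.symm
    _ ≤ volume (halfCube z) + volume (reflect ⁻¹' halfCube z) :=
      (measure_mono cube_subset).trans (measure_union_le _ _)
    _ = 2 * volume (halfCube z) := by
      rw [(Measure.measurePreserving_sub_left volume _).measure_preimage
        (measurableSet_halfCube z).nullMeasurableSet, two_mul]

lemma pairwise_disjoint_halfCube :
    Pairwise fun z w : Fin n → ℤ => Disjoint (halfCube z) (halfCube w) := by
  intro z w hzw
  refine Set.disjoint_left.mpr fun x hxz hxw => hzw (funext fun i => ?_)
  have hz := hxz.1 i trivial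
  have hw := hxw.1 i trivial
  simp only [Metric.mem_ball, Real.dist_eq, abs_lt] at hz hw
  have : |((z i - w i : ℤ) : ℝ)| < 1 := by
    push_cast
    exact abs_sub_lt_iff.mpr ⟨by linarith, by linarith⟩
  have := Int.abs_lt_one_iff.mp (by exact_mod_cast this)
  omega

lemma sum_sq_le_of_mem_halfCube {z : Fin n → ℤ} {x : Fin n → ℝ} (hx : x ∈ halfCube z) :
    ∑ i, x i ^ 2 ≤ ∑ i, (z i : ℝ) ^ 2 + n / 4 := by
  have coord : ∀ i, x i ^ 2 ≤ (z i : ℝ) ^ 2 + 2 * ((z i : ℝ) * (x i - z i)) + 1 / 4 := by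
    intro i
    have := hx.1 i trivial
    simp only [Metric.mem_ball, Real.dist_eq, abs_lt] at this
    nlinarith
  calc ∑ i, x i ^ 2 ≤ ∑ i, ((z i : ℝ) ^ 2 + 2 * ((z i : ℝ) * (x i - z i)) + 1 / 4) :=
        Finset.sum_le_sum fun i _ => coord i
    _ = ∑ i, (z i : ℝ) ^ 2 + 2 * ∑ i, (z i : ℝ) * (x i - z i) + n / 4 := by
        simp only [Finset.sum_add_distrib, ← Finset.mul_sum, Finset.sum_const, Finset.card_univ,
          Fintype.card_fin, nsmul_eq_mul]
        ring
    _ ≤ ∑ i, (z i : ℝ) ^ 2 + n / 4 := by linarith [hx.2.out]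

lemma card_le_two_mul_volume (m : ℝ) (S : Finset (Fin n → ℤ))
    (hS : ∀ z ∈ S, ∑ i, (z i : ℝ) ^ 2 ≤ m) :
    (#S : ℝ≥0∞) ≤ 2 * volume {x : Fin n → ℝ | ∑ i, x i ^ 2 ≤ m + n / 4} :=
  calc (#S : ℝ≥0∞) = ∑ _z ∈ S, 1 := by simp
    _ ≤ ∑ z ∈ S, 2 * volume (halfCube z) :=
      Finset.sum_le_sum fun z _ => one_le_two_mul_volume_halfCube z
    _ = 2 * volume (⋃ z ∈ S, halfCube z) := by
      rw [measure_biUnion_finset (pairwise_disjoint_halfCube.set_pairwise _)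
        fun z _ => measurableSet_halfCube z, Finset.mul_sum]
    _ ≤ 2 * volume {x : Fin n → ℝ | ∑ i, x i ^ 2 ≤ m + n / 4} := by
      gcongr
      refine Set.iUnion₂_subset fun z hz x hx => ?_
      exact (sum_sq_le_of_mem_halfCube hx).trans (by linarith [hS z hz])

lemma volume_setOf_sum_sq_le [NeZero n] {R : ℝ} (hR : 0 ≤ R) :
    volume {x : Fin n → ℝ | ∑ i, x i ^ 2 ≤ R} =
      ENNReal.ofReal (R ^ ((n : ℝ) / 2) * π ^ ((n : ℝ) / 2) / Gamma (n / 2 + 1)) := by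
  have ball_eq : {x : Fin n → ℝ | ∑ i, x i ^ 2 ≤ R} =
      WithLp.toLp 2 ⁻¹' Metric.closedBall (0 : EuclideanSpace ℝ (Fin n)) √R := by
    ext x
    simp [EuclideanSpace.norm_eq, Real.sqrt_le_sqrt_iff hR]
  rw [ball_eq, (PiLp.volume_preserving_toLp (Fin n)).measure_preimage
    measurableSet_closedBall.nullMeasurableSet, EuclideanSpace.volume_closedBall,
    Fintype.card_fin, ← ENNReal.ofReal_pow (Real.sqrt_nonneg _),
    ← ENNReal.ofReal_mul (by positivity),
    Real.rpow_div_two_eq_sqrt _ hR, Real.rpow_div_two_eq_sqrt _ Real.pi_pos.le]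
  simp only [Real.rpow_natCast, mul_div_assoc]

lemma card_le_two_mul_ball_volume (hn : 0 < n) {m : ℝ} (hm : 0 ≤ m)
    (S : Finset (Fin n → ℤ)) (hS : ∀ z ∈ S, ∑ i, (z i : ℝ) ^ 2 ≤ m) :
    (#S : ℝ) ≤ 2 * ((m + n / 4) ^ ((n : ℝ) / 2) * π ^ ((n : ℝ) / 2) / Gamma (n / 2 + 1)) := by
  have : NeZero n := ⟨hn.ne'⟩
  have h := card_le_two_mul_volume m S hS
  rw [volume_setOf_sum_sq_le (by positivity), ← ENNReal.ofReal_natCast, ← ENNReal.ofReal_ofNat,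
    ← ENNReal.ofReal_mul zero_le_two] at h
  exact (ENNReal.ofReal_le_ofReal_iff (by positivity)).mp h

end HalfCube

open scoped Pointwise in
lemma two_mul_card_filter_le {G : Type*} [AddGroup G] [DecidableEq G] {S : Finset G}
    (hS : ∀ z ∈ S, -z ∈ S) (p : G → Prop) [DecidablePred p] (hp : ∀ z, p z → ¬p (-z)) :
    2 * #(S.filter p) ≤ #S := by
  have disjoint : Disjoint (S.filter p) (-S.filter p) := by
    refine Finset.disjoint_left.mpr fun z hz hz' => hp z (Finset.mem_filter.mp hz).2 ?_
    exact (Finset.mem_filter.mp (Finset.mem_neg'.mp hz')).2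
  calc 2 * #(S.filter p) = #(S.filter p ∪ -S.filter p) := by
        rw [Finset.card_union_of_disjoint disjoint, Finset.card_neg, two_mul]
    _ ≤ #S := Finset.card_le_card <| Finset.union_subset (Finset.filter_subset _ _) fun z hz =>
        neg_neg z ▸ hS _ (Finset.mem_filter.mp (Finset.mem_neg'.mp hz)).1

noncomputable def shortVectors (n : ℕ) (m : ℤ) : Finset (Fin n → ℤ) :=
  (Fintype.piFinset fun _ => Icc (-m) m).filter fun z => ∑ i, z i ^ 2 ≤ m

lemma mem_shortVectors {n : ℕ} {m : ℤ} {z : Fin n → ℤ} :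
    z ∈ shortVectors n m ↔ ∑ i, z i ^ 2 ≤ m := by
  refine ⟨fun h => (Finset.mem_filter.mp h).2, fun h => Finset.mem_filter.mpr ⟨?_, h⟩⟩
  refine Fintype.mem_piFinset.mpr fun i => Finset.mem_Icc.mpr ?_
  have : z i ^ 2 ≤ m :=
    (Finset.single_le_sum (fun j _ => sq_nonneg (z j)) (Finset.mem_univ i)).trans h
  constructor <;> nlinarith

section Greedy

variable (μ : ℕ) {n : ℕ}

def admissible (s : Fin n → ℕ) : Set ℕ :=
  {t | 1 ≤ t ∧ ∀ (z : Fin n → ℤ) (c : ℤ), 1 ≤ c → ∑ i, z i ^ 2 + c ^ 2 < μ →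
      ∑ i, (s i : ℤ) * z i + t * c ≠ 0}

def KernelMinGE (s : Fin n → ℕ) : Prop :=
  ∀ z : Fin n → ℤ, z ≠ 0 → ∑ i, (s i : ℤ) * z i = 0 → (μ : ℤ) ≤ ∑ i, z i ^ 2

-- The solution `z` of `∑ sᵢ zᵢ + t c = 0` is nonzero, so `c² ≤ μ - 2`.
noncomputable def forbidden (s : Fin n → ℕ) : Finset ℕ :=
  (((shortVectors n (μ - 1)).filter fun z => ∑ i, (s i : ℤ) * z i < 0) ×ˢ
      Icc 1 (Nat.sqrt (μ - 2))).image
    fun p => (-∑ i, (s i : ℤ) * p.1 i).toNat / p.2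

variable {μ}

lemma mem_admissible_of_notMem_forbidden {s : Fin n → ℕ} {t : ℕ} (ht : 1 ≤ t)
    (hforb : t ∉ forbidden μ s) : t ∈ admissible μ s := by
  refine ⟨ht, fun z c hc hlt hzero => hforb ?_⟩
  lift c to ℕ using by omega
  have dot_neg : ∑ i, (s i : ℤ) * z i < 0 := by nlinarith
  have z_ne : z ≠ 0 := by rintro rfl; simp at dot_neg
  obtain ⟨j, hj⟩ := Function.ne_iff.mp z_ne
  have one_le_norm : 1 ≤ ∑ i, z i ^ 2 :=
    (Finset.single_le_sum (fun i _ => sq_nonneg (z i)) (Finset.mem_univ j)).trans'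
      (pow_two_pos_of_ne_zero hj)
  have c_le_sqrt : c ≤ Nat.sqrt (μ - 2) :=
    Nat.le_sqrt'.mpr (by zify [show 2 ≤ μ by nlinarith]; nlinarith)
  refine Finset.mem_image.mpr ⟨(z, c), Finset.mem_product.mpr ⟨?_, ?_⟩, ?_⟩
  · exact Finset.mem_filter.mpr ⟨mem_shortVectors.mpr (by nlinarith), dot_neg⟩
  · exact Finset.mem_Icc.mpr ⟨by omega, c_le_sqrt⟩
  · simp only
    rw [show -∑ i, (s i : ℤ) * z i = ((t * c : ℕ) : ℤ) by push_cast; linarith, Int.toNat_natCast,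
      Nat.mul_div_cancel _ (by omega)]

lemma card_forbidden_le (hμ : 2 ≤ μ) (hn : 0 < n) (s : Fin n → ℕ) :
    (#(forbidden μ s) : ℝ) ≤
      √((μ : ℝ) - 2) * (μ - 1 + n / 4) ^ ((n : ℝ) / 2) * π ^ ((n : ℝ) / 2) /
        Gamma (n / 2 + 1) := by
  set negative := (shortVectors n (μ - 1)).filter fun z => ∑ i, (s i : ℤ) * z i < 0
  have card_le_mul : #(forbidden μ s) ≤ Nat.sqrt (μ - 2) * #negative := by
    refine Finset.card_image_le.trans ?_
    rw [Finset.card_product, Nat.card_Icc, Nat.add_sub_cancel, mul_comm]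
  have two_mul_card_negative : 2 * #negative ≤ #(shortVectors n (μ - 1)) := by
    refine two_mul_card_filter_le (fun z hz => ?_) _ fun z hz hz' => ?_
    · simpa only [mem_shortVectors, Pi.neg_apply, neg_sq] using hz
    · simp only [Pi.neg_apply, mul_neg, Finset.sum_neg_distrib] at hz'
      linarith
  have hμ' : (2 : ℝ) ≤ μ := by exact_mod_cast hμ
  have card_short := card_le_two_mul_ball_volume hn (m := (μ : ℝ) - 1) (by linarith)
    (shortVectors n (μ - 1)) fun z hz => by exact_mod_cast mem_shortVectors.mp hz
  have sqrt_le : (Nat.sqrt (μ - 2) : ℝ) ≤ √((μ : ℝ) - 2) := by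
    simpa [Nat.cast_sub hμ] using Real.nat_sqrt_le_real_sqrt (a := μ - 2)
  calc (#(forbidden μ s) : ℝ) ≤ Nat.sqrt (μ - 2) * #negative := by exact_mod_cast card_le_mul
    _ ≤ √((μ : ℝ) - 2) * #negative := by gcongr
    _ ≤ √((μ : ℝ) - 2) *
        ((μ - 1 + n / 4) ^ ((n : ℝ) / 2) * π ^ ((n : ℝ) / 2) / Gamma (n / 2 + 1)) := by
      gcongr
      have : (2 * #negative : ℝ) ≤ #(shortVectors n (μ - 1)) := by
        exact_mod_cast two_mul_card_negative
      linarith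
    _ = _ := by ring

lemma exists_mem_admissible_le (s : Fin n → ℕ) :
    ∃ t ∈ admissible μ s, t ≤ #(forbidden μ s) + 1 := by
  obtain ⟨t, ht, hforb⟩ := Finset.exists_mem_notMem_of_card_lt_card
    (s := forbidden μ s) (t := Icc 1 (#(forbidden μ s) + 1)) (by simp)
  rw [Finset.mem_Icc] at ht
  exact ⟨t, mem_admissible_of_notMem_forbidden ht.1 hforb, ht.2⟩

lemma admissible_subset_init (s : Fin (n + 1) → ℕ) :
    admissible μ s ⊆ admissible μ (Fin.init s) := by
  refine fun t ⟨ht, hs⟩ => ⟨ht, fun z c hc hlt => ?_⟩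
  simpa [Fin.sum_univ_castSucc, Fin.init] using
    hs (Fin.snoc z 0) c hc (by simpa [Fin.sum_univ_castSucc])

lemma KernelMinGE.of_init {s : Fin (n + 1) → ℕ} (hinit : KernelMinGE μ (Fin.init s))
    (hlast : s (Fin.last n) ∈ admissible μ (Fin.init s)) : KernelMinGE μ s := by
  intro z hz hdot
  by_contra! hlt
  simp only [Fin.sum_univ_castSucc] at hdot hlt
  rcases lt_trichotomy (z (Fin.last n)) 0 with hneg | hzero | hpos
  · refine hlast.2 (-Fin.init z) (-z (Fin.last n)) (by omega) (by simpa [Fin.init] using hlt) ?_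
    simp only [Pi.neg_apply, mul_neg, Finset.sum_neg_distrib, Fin.init]
    linarith
  · have init_ne : Fin.init z ≠ 0 := fun h => hz <| funext fun i => by
      induction i using Fin.lastCases with
      | last => exact hzero
      | cast j => exact congrFun h j
    have := hinit (Fin.init z) init_ne (by simpa [Fin.init, hzero] using hdot)
    simp only [Fin.init, hzero] at this hlt
    linarith
  · exact hlast.2 (Fin.init z) (z (Fin.last n)) hpos (by simpa [Fin.init] using hlt) hdot

variable (μ)

noncomputable def greedySeq : ℕ → ℕ
  | n => sInf (admissible μ fun i : Fin n => greedySeq i)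

lemma greedySeq_mem_admissible (n : ℕ) :
    greedySeq μ n ∈ admissible μ fun i : Fin n => greedySeq μ i := by
  rw [greedySeq]
  obtain ⟨t, ht, -⟩ := exists_mem_admissible_le (μ := μ) fun i : Fin n => greedySeq μ i
  exact Nat.sInf_mem ⟨t, ht⟩

lemma greedySeq_le_card_forbidden_add_one (n : ℕ) :
    greedySeq μ n ≤ #(forbidden μ fun i : Fin n => greedySeq μ i) + 1 := by
  rw [greedySeq]
  obtain ⟨t, ht, htle⟩ := exists_mem_admissible_le (μ := μ) fun i : Fin n => greedySeq μ i
  exact (Nat.sInf_le ht).trans htle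

lemma greedySeq_zero : greedySeq μ 0 = 1 := by
  refine le_antisymm ?_ (greedySeq_mem_admissible μ 0).1
  rw [greedySeq]
  exact Nat.sInf_le ⟨le_rfl, fun z c hc _ => by
    simp only [Finset.univ_eq_empty, Finset.sum_empty, zero_add, Nat.cast_one, one_mul]; omega⟩

lemma greedySeq_pos (n : ℕ) : 0 < greedySeq μ n := (greedySeq_mem_admissible μ n).1

lemma greedySeq_monotone : Monotone (greedySeq μ) := by
  refine monotone_nat_of_le_succ fun n => ?_
  conv_lhs => rw [greedySeq]
  exact Nat.sInf_le (admissible_subset_init _ (greedySeq_mem_admissible μ (n + 1)))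

lemma kernelMinGE_greedySeq (n : ℕ) : KernelMinGE μ fun i : Fin n => greedySeq μ i := by
  induction n with
  | zero => exact fun z hz => absurd (Subsingleton.elim z 0) hz
  | succ n ih => exact KernelMinGE.of_init ih (greedySeq_mem_admissible μ n)

end Greedy

/-- Greedy construction of μ-sequences: for every integer `μ ≥ 2` there is an increasing
sequence of positive integers `s₀ = 1 ≤ s₁ ≤ …` such that for every `n ≥ 1` the lattice
`Λₙ = {z ∈ ℤ^{n+1} : ∑ sₖ zₖ = 0}` has minimum at least `μ`, and
`sₙ ≤ 1 + √(μ-2)·(μ-1+n/4)^{n/2}·π^{n/2}/Γ(n/2+1)`. -/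
theorem stmt_13 (μ : ℕ) (hμ : 2 ≤ μ) :
    ∃ s : ℕ → ℕ, s 0 = 1 ∧ Monotone s ∧ (∀ n, 0 < s n) ∧
      ∀ n : ℕ, 1 ≤ n →
        (∀ z : Fin (n + 1) → ℤ, z ≠ 0 → (∑ k : Fin (n + 1), (s (k : ℕ) : ℤ) * z k) = 0 →
          (μ : ℤ) ≤ ∑ k : Fin (n + 1), (z k) ^ 2) ∧
        (s n : ℝ) ≤ 1 + Real.sqrt ((μ : ℝ) - 2) * ((μ : ℝ) - 1 + n / 4) ^ ((n : ℝ) / 2) *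
            π ^ ((n : ℝ) / 2) / Real.Gamma ((n : ℝ) / 2 + 1) := by
  refine ⟨greedySeq μ, greedySeq_zero μ, greedySeq_monotone μ, greedySeq_pos μ,
    fun n hn => ⟨kernelMinGE_greedySeq μ (n + 1), ?_⟩⟩
  have hs : (greedySeq μ n : ℝ) ≤ #(forbidden μ fun i : Fin n => greedySeq μ i) + 1 := by
    exact_mod_cast greedySeq_le_card_forbidden_add_one μ n
  have := card_forbidden_le hμ hn fun i : Fin n => greedySeq μ i
  linarith
end

section
/- For μ ≥ 2 and n ≥ 1 integers, the inequality 1 + √(μ−2)·(μ−1+n/4)^{n/2}·π^{n/2}/Γ(n/2+1) ≤ √μ·(μ+n/4)^{n/2}·π^{n/2}/Γ(n/2+1) holds. -/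
open Real

/-!
Clearing the denominator, the claim is `Γ(n/2 + 1) ≤ (√μ Qˢ - √(μ-2) Pˢ) πˢ` with `s = n/2`,
`P = μ - 1 + n/4 ≤ Q = μ + n/4`. Since `√μ (√μ - √(μ-2)) ≥ 1` (because `μ(μ-2) ≤ (μ-1)²`) and
`√Q ≥ √μ`, the bracket is at least `Q^(s - 1/2)`. Finally `Γ(n/2 + 1) ≤ c^((n-1)/2) π^(n/2)` for
every `c ≥ 2 + n/4`, by induction from `n` to `n + 2` through `Γ(x + 1) = x Γ(x)`, which only
needs `n/2 + 1 ≤ c π`.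
-/

theorem Gamma_half_add_one_le {n : ℕ} (hn : 1 ≤ n) {c : ℝ} (hc : 2 + n / 4 ≤ c) :
    Gamma (n / 2 + 1) ≤ c ^ ((n - 1) / 2 : ℝ) * π ^ (n / 2 : ℝ) := by
  obtain ⟨m, rfl⟩ := Nat.exists_eq_add_of_le' hn
  clear hn
  push_cast at hc ⊢
  induction m using Nat.twoStepInduction generalizing c with
  | zero =>
    have hΓ : Gamma (3 / 2) = √π / 2 := by
      rw [show (3 / 2 : ℝ) = 1 / 2 + 1 by norm_num, Gamma_add_one (by norm_num),
        Gamma_one_half_eq]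
      ring
    norm_num [hΓ, ← sqrt_eq_rpow]
  | one =>
    have hc_sqrt : 1 ≤ c ^ (1 / 2 : ℝ) := one_le_rpow (by linarith) (by norm_num)
    norm_num [Gamma_two]
    nlinarith [pi_gt_three]
  | more m ih _ =>
    push_cast at hc ⊢
    have hc_pos : 0 < c := by linarith [(m.cast_nonneg : (0 : ℝ) ≤ m)]
    have hrec : Gamma ((m + 2 + 1) / 2 + 1) = ((m + 1) / 2 + 1) * Gamma ((m + 1) / 2 + 1) := by
      rw [← Gamma_add_one (by positivity)]; ring_nf
    have hfactor : (m + 1) / 2 + 1 ≤ c * π := by nlinarith [pi_gt_three]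
    calc Gamma ((m + 2 + 1) / 2 + 1)
        = ((m + 1) / 2 + 1) * Gamma ((m + 1) / 2 + 1) := hrec
      _ ≤ (c * π) * (c ^ ((m + 1 - 1) / 2 : ℝ) * π ^ ((m + 1) / 2 : ℝ)) := by
        gcongr
        exact ih (by linarith)
      _ = c ^ ((m + 2 + 1 - 1) / 2 : ℝ) * π ^ ((m + 2 + 1) / 2 : ℝ) := by
        rw [show (m + 2 + 1 - 1) / 2 = (m + 1 - 1) / 2 + (1 : ℝ) by ring,
          show (m + 2 + 1) / 2 = (m + 1) / 2 + (1 : ℝ) by ring,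
          rpow_add hc_pos, rpow_add pi_pos, rpow_one, rpow_one]
        ring

theorem one_le_sqrt_mul_sub_sqrt_sub_two {x : ℝ} (hx : 2 ≤ x) :
    1 ≤ √x * (√x - √(x - 2)) := by
  have hprod : √x * √(x - 2) ≤ x - 1 := by
    rw [← sqrt_mul (by linarith)]
    exact sqrt_le_iff.mpr ⟨by linarith, by nlinarith⟩
  nlinarith [mul_self_sqrt (by linarith : (0 : ℝ) ≤ x)]

theorem rpow_sub_half_le_sqrt_mul_rpow_sub {x p q s : ℝ} (hx : 2 ≤ x) (hxq : x ≤ q)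
    (hp : 0 ≤ p) (hpq : p ≤ q) (hs : 0 ≤ s) :
    q ^ (s - 1 / 2) ≤ √x * q ^ s - √(x - 2) * p ^ s := by
  have hq : 0 < q := by linarith
  have hsplit : q ^ s = √q * q ^ (s - 1 / 2) := by
    rw [sqrt_eq_rpow, ← rpow_add hq]; ring_nf
  have hpow : p ^ s ≤ q ^ s := rpow_le_rpow hp hpq hs
  have hsqrt : √x ≤ √q := sqrt_le_sqrt hxq
  have hgap : 0 ≤ √x - √(x - 2) := sub_nonneg.mpr (sqrt_le_sqrt (by linarith))
  calc q ^ (s - 1 / 2)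
      ≤ √x * (√x - √(x - 2)) * q ^ (s - 1 / 2) :=
        le_mul_of_one_le_left (by positivity) (one_le_sqrt_mul_sub_sqrt_sub_two hx)
    _ ≤ (√x - √(x - 2)) * q ^ s := by
        rw [hsplit, mul_comm √x, mul_assoc]; gcongr
    _ ≤ √x * q ^ s - √(x - 2) * p ^ s := by
        linarith [mul_le_mul_of_nonneg_left hpow (sqrt_nonneg (x - 2))]

/-- For integers `μ ≥ 2` and `n ≥ 1`:
`1 + √(μ-2)·(μ-1+n/4)^{n/2}·π^{n/2}/Γ(n/2+1) ≤ √μ·(μ+n/4)^{n/2}·π^{n/2}/Γ(n/2+1)`. -/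
theorem stmt_14 (μ n : ℕ) (hμ : 2 ≤ μ) (hn : 1 ≤ n) :
    1 + Real.sqrt ((μ : ℝ) - 2) * ((μ : ℝ) - 1 + n / 4) ^ ((n : ℝ) / 2) *
        π ^ ((n : ℝ) / 2) / Real.Gamma ((n : ℝ) / 2 + 1) ≤
      Real.sqrt (μ : ℝ) * ((μ : ℝ) + n / 4) ^ ((n : ℝ) / 2) *
        π ^ ((n : ℝ) / 2) / Real.Gamma ((n : ℝ) / 2 + 1) := by
  have hμ_real : (2 : ℝ) ≤ μ := by exact_mod_cast hμ
  have hn_nonneg : (0 : ℝ) ≤ n := n.cast_nonneg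
  have hΓ : Gamma (n / 2 + 1) ≤ ((μ : ℝ) + n / 4) ^ ((n - 1) / 2 : ℝ) * π ^ (n / 2 : ℝ) :=
    Gamma_half_add_one_le hn (by linarith)
  have hgap : ((μ : ℝ) + n / 4) ^ ((n - 1) / 2 : ℝ) ≤
      √μ * ((μ : ℝ) + n / 4) ^ (n / 2 : ℝ) - √(μ - 2) * ((μ : ℝ) - 1 + n / 4) ^ (n / 2 : ℝ) := by
    rw [show ((n : ℝ) - 1) / 2 = n / 2 - 1 / 2 by ring]
    exact rpow_sub_half_le_sqrt_mul_rpow_sub hμ_real (by linarith) (by linarith) (by linarith)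
      (by positivity)
  have hπ : 0 ≤ π ^ (n / 2 : ℝ) := by positivity
  rw [← le_sub_iff_add_le, ← sub_div, one_le_div (Gamma_pos_of_pos (by positivity))]
  linarith [mul_le_mul_of_nonneg_right hgap hπ]
end

section
/- Let n ≥ 2 and let δ_{n−1}, δ_n > 0 satisfy the inequality 2^{n−1} δ_{n−1} · (π^{(n−1)/2}/Γ((n+1)/2)) · Σ_{k=1}^{⌊2δ_n/δ_{n−1}⌋} (Σ_{l|k} μ(l)/l^{n−1}) · (1 − (k δ_{n−1}/(2δ_n))²)^{(n−1)/2} ≥ 1. Then δ_n ≥ 1/(2^n V_n), where V_n denotes the volume of the n-dimensional unit ball. -/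
open Real ArithmeticFunction MeasureTheory
open scoped ArithmeticFunction.Moebius

noncomputable def invpowAF (m : ℕ) : ArithmeticFunction ℝ :=
  ⟨fun d => if d = 0 then 0 else ((d : ℝ) ^ m)⁻¹, by simp⟩

lemma invpowAF_apply (m : ℕ) {d : ℕ} (hd : d ≠ 0) : invpowAF m d = ((d : ℝ) ^ m)⁻¹ := by
  simp [invpowAF, hd]

lemma invpowAF_mult (m : ℕ) : (invpowAF m).IsMultiplicative := by
  refine ⟨by simp [invpowAF], ?_⟩
  intro a b _
  rcases eq_or_ne a 0 with rfl | ha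
  · simp [invpowAF]
  rcases eq_or_ne b 0 with rfl | hb
  · simp [invpowAF]
  simp only [invpowAF_apply _ ha, invpowAF_apply _ hb, invpowAF_apply _ (mul_ne_zero ha hb)]
  push_cast
  rw [mul_pow, mul_inv]

lemma sqf_prod' {s : Finset ℕ} (hs : ∀ p ∈ s, p.Prime) : Squarefree (∏ p ∈ s, p) := by
  induction s using Finset.induction_on with
  | empty => simpa using squarefree_one
  | insert a s hns ih =>
    rw [Finset.prod_insert hns, Nat.squarefree_mul_iff]
    have ha := hs a (Finset.mem_insert_self a s)
    refine ⟨?_, ha.squarefree, ih fun p hp => hs p (Finset.mem_insert_of_mem hp)⟩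
    exact Nat.Coprime.prod_right fun p hp =>
      (Nat.coprime_primes ha (hs p (Finset.mem_insert_of_mem hp))).2
        (fun he => hns (he ▸ hp))

lemma moebius_sum_le_one (m k : ℕ) (hk : k ≠ 0) :
    ∑ l ∈ k.divisors, (μ l : ℝ) / (l : ℝ) ^ m ≤ 1 := by
  have hstep : ∀ l ∈ k.divisors, (μ l : ℝ) / (l : ℝ) ^ m = (μ l : ℝ) * invpowAF m l := by
    intro l hl
    have hl0 : l ≠ 0 := Nat.pos_of_mem_divisors hl |>.ne'
    rw [invpowAF_apply _ hl0, div_eq_mul_inv]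
  rw [Finset.sum_congr rfl hstep]
  set r := ∏ p ∈ k.primeFactors, p with hr
  have hprimes : ∀ p ∈ k.primeFactors, p.Prime := fun p hp => Nat.prime_of_mem_primeFactors hp
  have hrsq : Squarefree r := sqf_prod' hprimes
  have hsub : r.divisors ⊆ k.divisors :=
    Nat.divisors_subset_of_dvd hk (Nat.prod_primeFactors_dvd k)
  have hzero : ∀ l ∈ k.divisors, l ∉ r.divisors → (μ l : ℝ) * invpowAF m l = 0 := by
    intro l hl hlr
    by_cases hsq : Squarefree l
    · exfalso
      apply hlr
      rw [Nat.mem_divisors]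
      refine ⟨?_, hrsq.ne_zero⟩
      calc l = ∏ p ∈ l.primeFactors, p := (Nat.prod_primeFactors_of_squarefree hsq).symm
        _ ∣ r := Finset.prod_dvd_prod_of_subset _ _ _
          (Nat.primeFactors_mono (Nat.mem_divisors.1 hl).1 hk)
    · rw [ArithmeticFunction.moebius_eq_zero_of_not_squarefree hsq]
      simp
  rw [← Finset.sum_subset hsub hzero,
    ← ArithmeticFunction.IsMultiplicative.prodPrimeFactors_one_sub_of_squarefree _
        (invpowAF_mult m) hrsq]
  apply Finset.prod_le_one
  · intro p hp
    have hpp : p.Prime := Nat.prime_of_mem_primeFactors hp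
    rw [invpowAF_apply _ hpp.ne_zero]
    have h1 : (1:ℝ) ≤ (p:ℝ) ^ m := one_le_pow₀ (by exact_mod_cast hpp.one_lt.le)
    have h2 : ((p:ℝ) ^ m)⁻¹ ≤ 1 := inv_le_one_of_one_le₀ h1
    linarith
  · intro p hp
    have hpp : p.Prime := Nat.prime_of_mem_primeFactors hp
    rw [invpowAF_apply _ hpp.ne_zero]
    have : (0:ℝ) ≤ ((p:ℝ) ^ m)⁻¹ := by positivity
    linarith

lemma beta_complex' (p : ℝ) :
    Complex.betaIntegral (1/2) (p+1)
      = ((∫ x in (0:ℝ)..1, x ^ (-(1/2) : ℝ) * (1 - x) ^ p : ℝ) : ℂ) := by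
  rw [Complex.betaIntegral, ← intervalIntegral.integral_ofReal]
  apply intervalIntegral.integral_congr
  intro x hx
  rw [Set.uIcc_of_le (by norm_num : (0:ℝ) ≤ 1)] at hx
  obtain ⟨hx0, hx1⟩ := hx
  have e1 : ((x ^ (-(1/2):ℝ) : ℝ) : ℂ) = (x:ℂ) ^ ((1:ℂ)/2 - 1) := by
    rw [Complex.ofReal_cpow hx0]
    norm_num
  have e2 : (((1 - x) ^ p : ℝ) : ℂ) = ((1:ℂ) - x) ^ ((p:ℂ) + 1 - 1) := by
    rw [Complex.ofReal_cpow (by linarith : (0:ℝ) ≤ 1 - x)]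
    push_cast
    norm_num
  push_cast
  rw [← e1, ← e2]

lemma subst_sq (p : ℝ) :
    ∫ x in (0:ℝ)..1, x ^ (-(1/2) : ℝ) * (1 - x) ^ p
      = 2 * ∫ x in (0:ℝ)..1, (1 - x ^ 2) ^ p := by
  have himg : (fun t : ℝ => t ^ 2) '' Set.Ioo (0:ℝ) 1 = Set.Ioo 0 1 := by
    ext y
    constructor
    · rintro ⟨t, ⟨ht0, ht1⟩, rfl⟩
      exact ⟨by positivity, pow_lt_one₀ ht0.le ht1 (by norm_num)⟩
    · rintro ⟨hy0, hy1⟩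
      refine ⟨Real.sqrt y, ⟨Real.sqrt_pos.2 hy0, ?_⟩, Real.sq_sqrt hy0.le⟩
      nlinarith [Real.sq_sqrt hy0.le, Real.sqrt_nonneg y]
  have hinj : Set.InjOn (fun t : ℝ => t ^ 2) (Set.Ioo 0 1) := by
    intro a ha b hb hab
    simp only at hab
    nlinarith [ha.1, hb.1]
  have hderiv : ∀ x ∈ Set.Ioo (0:ℝ) 1,
      HasDerivWithinAt (fun t : ℝ => t ^ 2) (2 * x) (Set.Ioo 0 1) x := by
    intro x _
    simpa using (hasDerivAt_pow 2 x).hasDerivWithinAt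
  have key : ∫ x in Set.Ioo (0:ℝ) 1, x ^ (-(1/2) : ℝ) * (1 - x) ^ p
      = ∫ x in Set.Ioo (0:ℝ) 1, |2 * x| • ((x ^ 2) ^ (-(1/2) : ℝ) * (1 - x ^ 2) ^ p) := by
    conv_lhs => rw [← himg]
    exact MeasureTheory.integral_image_eq_integral_abs_deriv_smul measurableSet_Ioo hderiv hinj _
  rw [intervalIntegral.integral_of_le (by norm_num : (0:ℝ) ≤ 1),
    intervalIntegral.integral_of_le (by norm_num : (0:ℝ) ≤ 1),
    MeasureTheory.integral_Ioc_eq_integral_Ioo,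
    MeasureTheory.integral_Ioc_eq_integral_Ioo, key, ← MeasureTheory.integral_const_mul]
  apply MeasureTheory.setIntegral_congr_fun measurableSet_Ioo
  intro x ⟨hx0, hx1⟩
  simp only [smul_eq_mul]
  have h1 : ((x:ℝ) ^ 2) ^ (-(1/2):ℝ) = x⁻¹ := by
    rw [← Real.rpow_natCast x 2, ← Real.rpow_mul hx0.le]
    norm_num
    exact Real.rpow_neg_one x
  rw [h1, abs_of_pos (by positivity)]
  field_simp

lemma integral_one_sub_sq_rpow (p : ℝ) (hp : 0 < p) :
    2 * ∫ x in (0:ℝ)..1, (1 - x ^ 2) ^ p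
      = Real.sqrt π * Real.Gamma (p + 1) / Real.Gamma (p + 3/2) := by
  have hgam := Complex.Gamma_mul_Gamma_eq_betaIntegral
    (s := 1/2) (t := (p:ℂ) + 1) (by norm_num) (by simp; linarith)
  rw [beta_complex' p, subst_sq p] at hgam
  have harg : (1/2 : ℂ) + ((p:ℂ) + 1) = ((p + 3/2 : ℝ) : ℂ) := by push_cast; ring
  have h12 : (1/2 : ℂ) = ((1/2 : ℝ) : ℂ) := by norm_num
  have hp1 : (p:ℂ) + 1 = ((p + 1 : ℝ) : ℂ) := by push_cast; ring
  rw [harg, h12, hp1, Complex.Gamma_ofReal, Complex.Gamma_ofReal, Complex.Gamma_ofReal,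
    ← Complex.ofReal_mul, ← Complex.ofReal_mul] at hgam
  have hreal : Real.Gamma (1/2) * Real.Gamma (p + 1)
      = Real.Gamma (p + 3/2) * (2 * ∫ x in (0:ℝ)..1, (1 - x ^ 2) ^ p) :=
    Complex.ofReal_injective hgam
  have hGpos : 0 < Real.Gamma (p + 3/2) := Real.Gamma_pos_of_pos (by linarith)
  rw [Real.Gamma_one_half_eq] at hreal
  rw [eq_div_iff hGpos.ne']
  linarith [hreal]

lemma riemann_sum_le (p : ℝ) (hp : 0 < p) (h : ℝ) (hh : 0 < h) (M : ℕ)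
    (hM : (M : ℝ) * h ≤ 1) :
    ∑ k ∈ Finset.Icc 1 M, h * (1 - ((k : ℝ) * h) ^ 2) ^ p
      ≤ ∫ x in (0:ℝ)..1, (1 - x ^ 2) ^ p := by
  set g : ℝ → ℝ := fun x => (1 - x ^ 2) ^ p with hg
  set a : ℕ → ℝ := fun j => (j : ℝ) * h with ha
  have hgc : Continuous g := by
    rw [continuous_iff_continuousAt]
    intro x
    exact (Real.continuousAt_rpow_const _ p (Or.inr hp.le)).comp
      ((continuous_const.sub (continuous_pow 2)).continuousAt)
  have hanti : ∀ u v : ℝ, 0 ≤ u → u ≤ v → v ≤ 1 → g v ≤ g u := by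
    intro u v hu huv hv1
    exact Real.rpow_le_rpow (by nlinarith) (by nlinarith) hp.le
  have hstep : ∀ k ∈ Finset.Icc 1 M,
      h * g ((k : ℝ) * h) ≤ ∫ x in (((k : ℝ) - 1) * h)..((k : ℝ) * h), g x := by
    intro k hk
    obtain ⟨hk1, hkM⟩ := Finset.mem_Icc.1 hk
    have hk1' : (1 : ℝ) ≤ (k : ℝ) := by exact_mod_cast hk1
    have hkM' : (k : ℝ) ≤ M := by exact_mod_cast hkM
    have hle : ((k : ℝ) - 1) * h ≤ (k : ℝ) * h := by nlinarith
    have hkh1 : (k : ℝ) * h ≤ 1 := le_trans (by nlinarith) hM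
    have hconst : ∫ _x in (((k : ℝ) - 1) * h)..((k : ℝ) * h), g ((k : ℝ) * h)
        = h * g ((k : ℝ) * h) := by
      rw [intervalIntegral.integral_const, smul_eq_mul]
      ring_nf
    rw [← hconst]
    exact intervalIntegral.integral_mono_on hle intervalIntegrable_const
      (hgc.intervalIntegrable _ _)
      (fun x hx => hanti x ((k : ℝ) * h) (le_trans (by nlinarith) hx.1) hx.2 hkh1)
  calc ∑ k ∈ Finset.Icc 1 M, h * g ((k : ℝ) * h)
      ≤ ∑ k ∈ Finset.Icc 1 M, ∫ x in (((k : ℝ) - 1) * h)..((k : ℝ) * h), g x :=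
        Finset.sum_le_sum hstep
    _ = ∑ i ∈ Finset.range M, ∫ x in (a i)..(a (i + 1)), g x := by
        rw [show Finset.Icc 1 M = Finset.Ico 1 (M + 1) by rfl, Finset.sum_Ico_eq_sum_range]
        apply Finset.sum_congr (by norm_num)
        intro i _
        congr 1 <;> simp only [ha] <;> push_cast <;> ring
    _ = ∫ x in (a 0)..(a M), g x := by
        apply intervalIntegral.sum_integral_adjacent_intervals
        intro i _
        exact hgc.intervalIntegrable _ _
    _ ≤ ∫ x in (0:ℝ)..1, g x := by
        have ha0 : a 0 = 0 := by simp [ha]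
        rw [ha0]
        apply intervalIntegral.integral_mono_interval le_rfl (by positivity) hM
        · filter_upwards [MeasureTheory.ae_restrict_mem measurableSet_Ioc] with x hx
          exact Real.rpow_nonneg (by nlinarith [hx.1, hx.2]) p
        · exact hgc.intervalIntegrable _ _

/-- Marin's argument: if `δₙ₋₁, δₙ > 0` satisfy
`2^{n-1}·δₙ₋₁·(π^{(n-1)/2}/Γ((n+1)/2))·∑_{k=1}^{⌊2δₙ/δₙ₋₁⌋}(∑_{l|k} μ(l)/l^{n-1})·(1-(kδₙ₋₁/(2δₙ))²)^{(n-1)/2} ≥ 1`,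
then `δₙ ≥ 1/(2ⁿVₙ)`, i.e. `Δₙ ≥ 2^{1-n}` up to the `ζ(n)` factor. -/
theorem stmt_16 (n : ℕ) (hn : 2 ≤ n) (δ' δ : ℝ) (hδ' : 0 < δ') (hδ : 0 < δ)
    (h : 1 ≤ 2 ^ (n - 1) * δ' * (π ^ (((n : ℝ) - 1) / 2) / Real.Gamma (((n : ℝ) + 1) / 2)) *
        ∑ k ∈ Finset.Icc 1 ⌊2 * δ / δ'⌋.toNat,
          (∑ l ∈ k.divisors, (μ l : ℝ) / (l : ℝ) ^ (n - 1)) *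
            (1 - ((k : ℝ) * δ' / (2 * δ)) ^ 2) ^ (((n : ℝ) - 1) / 2)) :
    1 / (2 ^ n * (π ^ ((n : ℝ) / 2) / Real.Gamma ((n : ℝ) / 2 + 1))) ≤ δ := by
  set p : ℝ := ((n : ℝ) - 1) / 2 with hpdef
  have hn1 : (2 : ℝ) ≤ (n : ℝ) := by exact_mod_cast hn
  have hp : 0 < p := by rw [hpdef]; linarith
  set h0 : ℝ := δ' / (2 * δ) with hh0def
  have hh0 : 0 < h0 := by positivity
  set M : ℕ := ⌊2 * δ / δ'⌋.toNat with hMdef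
  have hMle : (M : ℝ) * h0 ≤ 1 := by
    have h1 : (M : ℝ) ≤ 2 * δ / δ' := by
      have hle : 0 ≤ ⌊2 * δ / δ'⌋ := Int.floor_nonneg.2 (by positivity)
      have he : (M : ℝ) = ((⌊2 * δ / δ'⌋ : ℤ) : ℝ) := by
        rw [hMdef]
        exact_mod_cast Int.toNat_of_nonneg hle
      rw [he]
      exact Int.floor_le _
    calc (M : ℝ) * h0 ≤ (2 * δ / δ') * h0 := by
          apply mul_le_mul_of_nonneg_right h1 hh0.le
      _ = 1 := by rw [hh0def]; field_simp
  set A : ℝ := π ^ p / Real.Gamma (((n : ℝ) + 1) / 2) with hA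
  have hGA : 0 < Real.Gamma (((n : ℝ) + 1) / 2) := Real.Gamma_pos_of_pos (by linarith)
  have hApos : 0 < A := by
    rw [hA]
    exact div_pos (Real.rpow_pos_of_pos Real.pi_pos _) hGA
  -- Step 1: drop the Möbius factors
  have hterm : ∀ k ∈ Finset.Icc 1 M,
      (∑ l ∈ k.divisors, (μ l : ℝ) / (l : ℝ) ^ (n - 1)) *
          (1 - ((k : ℝ) * δ' / (2 * δ)) ^ 2) ^ p
        ≤ (1 - ((k : ℝ) * h0) ^ 2) ^ p := by
    intro k hk
    obtain ⟨hk1, hkM⟩ := Finset.mem_Icc.1 hk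
    have hke : (k : ℝ) * δ' / (2 * δ) = (k : ℝ) * h0 := by
      rw [hh0def]; ring
    rw [hke]
    have hkh1 : (k : ℝ) * h0 ≤ 1 := by
      calc (k : ℝ) * h0 ≤ (M : ℝ) * h0 := by
            apply mul_le_mul_of_nonneg_right (by exact_mod_cast hkM) hh0.le
        _ ≤ 1 := hMle
    have hgnn : 0 ≤ (1 - ((k : ℝ) * h0) ^ 2) ^ p := by
      apply Real.rpow_nonneg
      nlinarith [mul_pos (by exact_mod_cast Nat.pos_of_ne_zero (by omega) : (0:ℝ) < k) hh0]
    exact mul_le_of_le_one_left hgnn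
      (moebius_sum_le_one (n - 1) k (by omega))
  have hS1 : 1 ≤ 2 ^ (n - 1) * δ' * A * ∑ k ∈ Finset.Icc 1 M, (1 - ((k : ℝ) * h0) ^ 2) ^ p := by
    refine le_trans h ?_
    apply mul_le_mul_of_nonneg_left (Finset.sum_le_sum hterm)
    positivity
  -- Step 2: Riemann sum vs integral
  set I : ℝ := ∫ x in (0:ℝ)..1, (1 - x ^ 2) ^ p with hI
  have hRS : ∑ k ∈ Finset.Icc 1 M, h0 * (1 - ((k : ℝ) * h0) ^ 2) ^ p ≤ I :=
    riemann_sum_le p hp h0 hh0 M hMle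
  have hSleI : ∑ k ∈ Finset.Icc 1 M, (1 - ((k : ℝ) * h0) ^ 2) ^ p ≤ I / h0 := by
    rw [le_div_iff₀ hh0]
    calc (∑ k ∈ Finset.Icc 1 M, (1 - ((k : ℝ) * h0) ^ 2) ^ p) * h0
        = ∑ k ∈ Finset.Icc 1 M, h0 * (1 - ((k : ℝ) * h0) ^ 2) ^ p := by
          rw [Finset.sum_mul]; exact Finset.sum_congr rfl fun k _ => mul_comm _ _
      _ ≤ I := hRS
  have hfinal : 1 ≤ 2 ^ (n - 1) * δ' * A * (I / h0) := by
    refine le_trans hS1 ?_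
    apply mul_le_mul_of_nonneg_left hSleI
    positivity
  -- Step 3: evaluate the integral
  have hIval : 2 * I = Real.sqrt π * Real.Gamma (p + 1) / Real.Gamma (p + 3/2) :=
    integral_one_sub_sq_rpow p hp
  -- rewrite everything
  have hp1 : p + 1 = ((n : ℝ) + 1) / 2 := by rw [hpdef]; ring
  have hp32 : p + 3/2 = (n : ℝ) / 2 + 1 := by rw [hpdef]; ring
  have hGn : 0 < Real.Gamma ((n : ℝ) / 2 + 1) := Real.Gamma_pos_of_pos (by linarith)
  rw [hp1, hp32] at hIval
  -- key: A * I = π^(n/2) / Γ(n/2+1) / 2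
  have hpisplit : π ^ p * Real.sqrt π = π ^ ((n : ℝ) / 2) := by
    rw [Real.sqrt_eq_rpow, ← Real.rpow_add Real.pi_pos, hpdef]
    congr 1
    ring
  have hIv2 : I = Real.sqrt π * Real.Gamma (((n : ℝ) + 1) / 2)
      / Real.Gamma ((n : ℝ) / 2 + 1) / 2 := by linarith [hIval]
  have hAI : A * I = π ^ ((n : ℝ) / 2) / Real.Gamma ((n : ℝ) / 2 + 1) / 2 := by
    rw [hA, hIv2, ← hpisplit]
    field_simp
  -- conclude
  have h2n : (2 : ℝ) ^ (n - 1) * 2 = 2 ^ n := by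
    rw [← pow_succ]
    congr 1
    omega
  have hcore : 1 ≤ 2 ^ n * δ * (A * I) := by
    have hrw : 2 ^ (n - 1) * δ' * A * (I / h0) = 2 ^ (n - 1) * 2 * δ * (A * I) := by
      rw [hh0def]
      field_simp
    rw [hrw, h2n] at hfinal
    exact hfinal
  set V : ℝ := π ^ ((n : ℝ) / 2) / Real.Gamma ((n : ℝ) / 2 + 1) with hV
  have hVpos : 0 < V := div_pos (Real.rpow_pos_of_pos Real.pi_pos _) hGn
  rw [hAI] at hcore
  rw [div_le_iff₀ (by positivity : (0:ℝ) < 2 ^ n * V)]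
  nlinarith [hcore, mul_pos (pow_pos (by norm_num : (0:ℝ) < 2) n) (mul_pos hδ hVpos)]
end

section
/- The set of lattices of the form Λ(s) = {z ∈ Z^{n+1} : ⟨z,s⟩ = 0}, where s ranges over nonzero vectors in N^{n+1}, is dense in the space of similarity classes of n-dimensional Euclidean lattices: for every positive definite symmetric G ∈ R^{n×n} and every ε > 0, there exist s ∈ N^{n+1}∖{0} and κ > 0 such that Λ(s) has a Gram matrix G' with ‖κ^{−2} G' − G‖ < ε. -/
/-!
Write `G = L Lᵀ` with `L` lower triangular (Cholesky, via the LDL decomposition) and let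
`V = round (κ [L | 0]) - [0 | I]`, an integral `n × (n + 1)` matrix whose rows have Gram matrix
`κ² G + O(κ)`. Deleting the first column of `V` leaves a lower triangular matrix with diagonal
`-1`, so `V s = 0` for some integral `s` with `s 0 = 1`. For such `s`, forgetting the coordinate `0`
is an isomorphism `Λ(s) ≅ ℤⁿ`, which sends the rows of `V` to the rows of a unimodular matrix;
hence the rows of `V` are a basis of `Λ(s)`. Changing the signs of the coordinates where `s` is
negative makes `s` natural and does not change the Gram matrix.
-/

open Matrix Filter Topology

lemma Matrix.PosDef.exists_lowerTriangular_mul_transpose_eq {ι : Type*} [Fintype ι]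
    [LinearOrder ι] [WellFoundedLT ι] [LocallyFiniteOrderBot ι] {G : Matrix ι ι ℝ}
    (hG : G.PosDef) :
    ∃ L : Matrix ι ι ℝ, L.IsLowerTriangular ∧ L * Lᵀ = G := by
  set d := LDL.diagEntries hG
  have hd : ∀ i, 0 ≤ d i := fun i => by
    have : d i = (LDL.lowerInv hG * G * (LDL.lowerInv hG)ᴴ) i i := by
      rw [← LDL.diag_eq_lowerInv_conj, LDL.diag, diagonal_apply_eq]
    exact this ▸ (hG.posSemidef.mul_mul_conjTranspose_same _).diag_nonneg
  have hlower : (LDL.lower hG).IsLowerTriangular :=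
    blockTriangular_inv_of_blockTriangular fun _ _ h => LDL.lowerInv_triangular hG h
  refine ⟨LDL.lower hG * diagonal fun i => √(d i), hlower.mul (blockTriangular_diagonal _), ?_⟩
  have hsqrt : (diagonal fun i => √(d i)) * (diagonal fun i => √(d i))ᵀ = LDL.diag hG := by
    rw [diagonal_transpose, diagonal_mul_diagonal, LDL.diag]
    exact congrArg diagonal (funext fun i => Real.mul_self_sqrt (hd i))
  rw [transpose_mul, ← Matrix.mul_assoc, Matrix.mul_assoc _ _ (diagonal _)ᵀ, hsqrt,
    ← conjTranspose_eq_transpose_of_trivial, LDL.lower_conj_diag]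

lemma tendsto_round_mul_div (x : ℝ) :
    Tendsto (fun κ : ℝ => (round (κ * x) : ℝ) / κ) atTop (𝓝 x) := by
  have herr : Tendsto (fun κ : ℝ => ((round (κ * x) : ℝ) - κ * x) / κ) atTop (𝓝 0) := by
    refine squeeze_zero_norm' ?_ ((tendsto_const_nhds (x := (1 / 2 : ℝ))).div_atTop tendsto_id)
    filter_upwards [eventually_gt_atTop 0] with κ hκ
    rw [norm_div, Real.norm_of_nonneg hκ.le, Real.norm_eq_abs, abs_sub_comm]
    exact div_le_div_of_nonneg_right (abs_sub_round _) hκ.le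
  refine (herr.add_const x).congr' ?_ |>.trans (by rw [zero_add])
  filter_upwards [eventually_gt_atTop 0] with κ hκ
  field_simp
  ring

namespace OrthogonalLattice

variable {n : ℕ} {s : Fin (n + 1) → ℤ} {Λ : Submodule ℤ (Fin (n + 1) → ℤ)}

lemma dotProduct_eq_head_add (hs : s 0 = 1) (z : Fin (n + 1) → ℤ) :
    s ⬝ᵥ z = z 0 + ∑ j : Fin n, s j.succ * z j.succ := by
  rw [dotProduct, Fin.sum_univ_succ, hs, one_mul]

lemma bijective_tail (hs : s 0 = 1) (hΛ : ∀ z, z ∈ Λ ↔ s ⬝ᵥ z = 0) :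
    Function.Bijective (LinearMap.funLeft ℤ ℤ Fin.succ ∘ₗ Λ.subtype) := by
  constructor
  · rw [← LinearMap.ker_eq_bot, LinearMap.ker_eq_bot']
    rintro ⟨z, hz⟩ htail
    have htail' : ∀ j : Fin n, z j.succ = 0 := congrFun htail
    have hz0 : z 0 = 0 := by
      simpa [dotProduct_eq_head_add hs, htail'] using (hΛ z).1 hz
    ext k
    induction k using Fin.cases <;> simp [hz0, htail']
  · intro w
    refine ⟨⟨Fin.cons (-∑ j, s j.succ * w j) w, (hΛ _).2 ?_⟩, ?_⟩
    · simp [dotProduct_eq_head_add hs]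
    · ext j
      simp [LinearMap.funLeft_apply]

noncomputable def tailEquiv (hs : s 0 = 1) (hΛ : ∀ z, z ∈ Λ ↔ s ⬝ᵥ z = 0) :
    Λ ≃ₗ[ℤ] (Fin n → ℤ) :=
  LinearEquiv.ofBijective _ (bijective_tail hs hΛ)

lemma exists_basis_eq_rows (hs : s 0 = 1) (hΛ : ∀ z, z ∈ Λ ↔ s ⬝ᵥ z = 0)
    (V : Matrix (Fin n) (Fin (n + 1)) ℤ) (hVs : V *ᵥ s = 0)
    (hV : IsUnit (V.submatrix id Fin.succ).det) :
    ∃ b : Module.Basis (Fin n) ℤ Λ, ∀ i, (b i : Fin (n + 1) → ℤ) = V i := by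
  set M := V.submatrix id Fin.succ
  have hmem : ∀ i, V i ∈ Λ := fun i => (hΛ _).2 (by rw [dotProduct_comm]; exact congrFun hVs i)
  let rowEquiv := Mᵀ.toLinearEquiv' (Mᵀ.invertibleOfIsUnitDet (by rwa [det_transpose]))
  refine ⟨(Pi.basisFun ℤ (Fin n)).map (rowEquiv.trans (tailEquiv hs hΛ).symm), fun i => ?_⟩
  have : (tailEquiv hs hΛ).symm (M i) = ⟨V i, hmem i⟩ := by
    rw [LinearEquiv.symm_apply_eq]; ext j; rfl
  have hrow : rowEquiv (Pi.single i 1) = M i := by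
    change Matrix.toLin' Mᵀ (Pi.single i 1) = M i
    rw [Matrix.toLin'_apply, mulVec_single_one]; rfl
  simp only [Module.Basis.map_apply, Pi.basisFun_apply, LinearEquiv.trans_apply, hrow, this]

lemma exists_mulVec_eq_zero (V : Matrix (Fin n) (Fin (n + 1)) ℤ)
    (hV : IsUnit (V.submatrix id Fin.succ).det) :
    ∃ s : Fin (n + 1) → ℤ, s 0 = 1 ∧ V *ᵥ s = 0 := by
  set M := V.submatrix id Fin.succ
  set c : Fin n → ℤ := fun i => V i 0
  have hMM : M *ᵥ (M⁻¹ *ᵥ c) = c := by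
    rw [mulVec_mulVec, mul_nonsing_inv M hV, one_mulVec]
  refine ⟨vecCons 1 (-(M⁻¹ *ᵥ c)), rfl, funext fun i => ?_⟩
  rw [mulVec, dotProduct_cons, dotProduct_neg, mul_one]
  exact add_neg_eq_zero.2 (congrFun hMM i).symm

lemma exists_nat_basis_gram_eq (V : Matrix (Fin n) (Fin (n + 1)) ℤ)
    (hV : IsUnit (V.submatrix id Fin.succ).det) :
    ∃ s : Fin (n + 1) → ℕ, s 0 = 1 ∧ ∀ Λ : Submodule ℤ (Fin (n + 1) → ℤ),
      (∀ z, z ∈ Λ ↔ ∑ k, (s k : ℤ) * z k = 0) →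
      ∃ b : Module.Basis (Fin n) ℤ Λ, ∀ i j,
        (b i : Fin (n + 1) → ℤ) ⬝ᵥ (b j : Fin (n + 1) → ℤ) = V i ⬝ᵥ V j := by
  obtain ⟨s, hs0, hVs⟩ := exists_mulVec_eq_zero V hV
  set σ : Fin (n + 1) → ℤ := fun k => if s k < 0 then -1 else 1
  have hσσ : ∀ k, σ k * σ k = 1 := fun k => by simp only [σ]; split_ifs <;> norm_num
  have habs : ∀ k, ((s k).natAbs : ℤ) = σ k * s k := fun k => by
    simp only [σ, Int.natCast_natAbs]; split_ifs with h
    · rw [abs_of_neg h]; ring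
    · rw [abs_of_nonneg (not_lt.1 h)]; ring
  refine ⟨fun k => (s k).natAbs, by simp [hs0], fun Λ hΛ => ?_⟩
  have hVσ : IsUnit ((V * diagonal σ).submatrix id Fin.succ).det := by
    have : (V * diagonal σ).submatrix id Fin.succ =
        V.submatrix id Fin.succ * diagonal (σ ∘ Fin.succ) := by
      ext i j; simp
    rw [this, det_mul, det_diagonal]
    exact hV.mul (IsUnit.prod_univ_iff.2 fun k => IsUnit.of_mul_eq_one _ (hσσ _))
  have hσs : diagonal σ *ᵥ (fun k => ((s k).natAbs : ℤ)) = s := by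
    ext k; simp [mulVec_diagonal, habs, ← mul_assoc, hσσ]
  obtain ⟨b, hb⟩ := exists_basis_eq_rows (s := fun k => ((s k).natAbs : ℤ)) (by simp [hs0]) hΛ
    (V * diagonal σ) (by rw [← mulVec_mulVec, hσs, hVs]) hVσ
  refine ⟨b, fun i j => ?_⟩
  simp only [hb, dotProduct, mul_diagonal]
  exact Finset.sum_congr rfl fun k _ => by linear_combination (V i k * V j k) * hσσ k

end OrthogonalLattice

section RoundedRows

variable {n : ℕ}

def appendZeroCol (L : Matrix (Fin n) (Fin n) ℝ) : Matrix (Fin n) (Fin (n + 1)) ℝ :=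
  of fun i => Fin.snoc (α := fun _ => ℝ) (L i) 0

@[simp]
lemma appendZeroCol_castSucc (L : Matrix (Fin n) (Fin n) ℝ) (i k : Fin n) :
    appendZeroCol L i k.castSucc = L i k := by
  simp [appendZeroCol]

@[simp]
lemma appendZeroCol_last (L : Matrix (Fin n) (Fin n) ℝ) (i : Fin n) :
    appendZeroCol L i (Fin.last n) = 0 := by
  simp [appendZeroCol]

lemma appendZeroCol_eq_zero {L : Matrix (Fin n) (Fin n) ℝ} (hL : L.IsLowerTriangular)
    {i : Fin n} {k : Fin (n + 1)} (hik : i.castSucc < k) : appendZeroCol L i k = 0 := by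
  induction k using Fin.lastCases with
  | last => exact appendZeroCol_last L i
  | cast j =>
    rw [appendZeroCol_castSucc]
    exact hL (Fin.castSucc_lt_castSucc_iff.1 hik)

noncomputable def roundedRows (L : Matrix (Fin n) (Fin n) ℝ) (κ : ℝ) :
    Matrix (Fin n) (Fin (n + 1)) ℤ :=
  of fun i k => round (κ * appendZeroCol L i k) - if k = i.succ then 1 else 0

lemma isUnit_det_roundedRows {L : Matrix (Fin n) (Fin n) ℝ}
    (hL : L.IsLowerTriangular) (κ : ℝ) :
    IsUnit ((roundedRows L κ).submatrix id Fin.succ).det := by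
  have htri : ((roundedRows L κ).submatrix id Fin.succ).IsLowerTriangular :=
    fun i j (hij : i < j) => by
      simp [roundedRows, appendZeroCol_eq_zero hL (Fin.castSucc_lt_succ_iff.2 hij.le),
        hij.ne']
  rw [det_of_isLowerTriangular _ htri]
  refine IsUnit.prod_univ_iff.2 fun i => ?_
  simp [roundedRows, appendZeroCol_eq_zero hL (Fin.castSucc_lt_succ (i := i))]

lemma tendsto_roundedRows_div (L : Matrix (Fin n) (Fin n) ℝ) (i : Fin n) (k : Fin (n + 1)) :
    Tendsto (fun κ => (roundedRows L κ i k : ℝ) / κ) atTop (𝓝 (appendZeroCol L i k)) := by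
  have hshift := (tendsto_const_nhds (x := ((if k = i.succ then 1 else 0 : ℤ) : ℝ))).div_atTop
    tendsto_id
  simpa [roundedRows, sub_div] using (tendsto_round_mul_div _).sub hshift

lemma tendsto_gram_roundedRows (L : Matrix (Fin n) (Fin n) ℝ) (i j : Fin n) :
    Tendsto (fun κ => (κ ^ 2)⁻¹ * ((roundedRows L κ i ⬝ᵥ roundedRows L κ j : ℤ) : ℝ)) atTop
      (𝓝 ((L * Lᵀ) i j)) := by
  have hlim := tendsto_finsetSum Finset.univ fun k _ =>
    (tendsto_roundedRows_div L i k).mul (tendsto_roundedRows_div L j k)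
  have hpad : ∑ k, appendZeroCol L i k * appendZeroCol L j k = (L * Lᵀ) i j := by
    simp [Fin.sum_univ_castSucc, mul_apply]
  rw [hpad] at hlim
  refine hlim.congr fun κ => ?_
  simp only [dotProduct, Int.cast_sum, Int.cast_mul, Finset.mul_sum]
  refine Finset.sum_congr rfl fun k _ => ?_
  ring

end RoundedRows

theorem stmt_18_general (n : ℕ) (G : Matrix (Fin n) (Fin n) ℝ)
    (hG : G.PosDef) (ε : ℝ) (hε : 0 < ε) :
    ∃ s : Fin (n + 1) → ℕ, s ≠ 0 ∧ ∃ κ : ℝ, 0 < κ ∧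
      ∀ Λ : Submodule ℤ (Fin (n + 1) → ℤ),
        (∀ z, z ∈ Λ ↔ (∑ k, (s k : ℤ) * z k) = 0) →
        ∃ b : Module.Basis (Fin n) ℤ Λ,
          ∀ i j, |(κ ^ 2)⁻¹ * (∑ k, ((b i).1 k : ℝ) * ((b j).1 k : ℝ)) - G i j| < ε := by
  obtain ⟨L, hL, hLG⟩ := hG.exists_lowerTriangular_mul_transpose_eq
  have hclose : ∀ i j, ∀ᶠ κ in atTop,
      |(κ ^ 2)⁻¹ * ((roundedRows L κ i ⬝ᵥ roundedRows L κ j : ℤ) : ℝ) - G i j| < ε :=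
    fun i j => by
      have hlim := tendsto_gram_roundedRows L i j
      rw [hLG] at hlim
      simpa only [Real.dist_eq] using Metric.tendsto_nhds.1 hlim ε hε
  obtain ⟨κ, hκ, hκG⟩ :=
    ((eventually_gt_atTop 0).and (eventually_all.2 fun i => eventually_all.2 (hclose i))).exists
  obtain ⟨s, hs0, hs⟩ :=
    OrthogonalLattice.exists_nat_basis_gram_eq _ (isUnit_det_roundedRows hL κ)
  refine ⟨s, fun h => by simp [h] at hs0, κ, hκ, fun Λ hΛ => ?_⟩
  obtain ⟨b, hb⟩ := hs Λ hΛ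
  refine ⟨b, fun i j => ?_⟩
  have hgram : ∑ k, ((b i).1 k : ℝ) * ((b j).1 k : ℝ) =
      ((roundedRows L κ i ⬝ᵥ roundedRows L κ j : ℤ) : ℝ) := by
    rw [← hb i j, dotProduct]; push_cast; rfl
  rw [hgram]
  exact hκG i j

/-- Density of the lattices `Λ(s) = {z ∈ ℤ^{n+1} : ⟨z,s⟩ = 0}` in the space of similarity
classes: for every positive definite symmetric `G` and every `ε > 0` there are
`s ∈ ℕ^{n+1}∖{0}` and `κ > 0` such that `Λ(s)` has a Gram matrix `G'` with
`|κ⁻²·G'ᵢⱼ - Gᵢⱼ| < ε` for all `i, j`. -/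
theorem stmt_18 (n : ℕ) (hn : 0 < n) (G : Matrix (Fin n) (Fin n) ℝ)
    (hG : G.PosDef) (hGsymm : G.IsSymm) (ε : ℝ) (hε : 0 < ε) :
    ∃ s : Fin (n + 1) → ℕ, s ≠ 0 ∧ ∃ κ : ℝ, 0 < κ ∧
      ∀ Λ : Submodule ℤ (Fin (n + 1) → ℤ),
        (∀ z, z ∈ Λ ↔ (∑ k, (s k : ℤ) * z k) = 0) →
        ∃ b : Module.Basis (Fin n) ℤ Λ,
          ∀ i j, |(κ ^ 2)⁻¹ * (∑ k, ((b i).1 k : ℝ) * ((b j).1 k : ℝ)) - G i j| < ε :=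
  stmt_18_general n G hG ε hε
end
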